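/- arXiv:1905.06493 — 2 statements merged into one kernel-verified Lean document; each statement's English description precedes it below -/
import Mathlib

section
/- Let p ≥ 2 and define G(t) = |t|^{p-2} t for t ∈ ℝ. If t₁, t₂ ∈ ℝ satisfy t₁ + t₂ > 0, then G(t₁ + t₂) ≤ 2^{p-2} (G(t₁) + G(t₂)). -/
open Real NNReal

/-- `(a+b)^q ≤ 2^(q-1) (a^q + b^q)` for nonneg reals and `1 ≤ q`. -/
lemma aux_convex {a b q : ℝ} (ha : 0 ≤ a) (hb : 0 ≤ b) (hq : 1 ≤ q) :
    (a + b) ^ q ≤ 2 ^ (q - 1) * (a ^ q + b ^ q) := by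
  have key := NNReal.rpow_add_le_mul_rpow_add_rpow a.toNNReal b.toNNReal hq
  calc (a + b) ^ q = (((a.toNNReal + b.toNNReal) ^ q : ℝ≥0) : ℝ) := by
        rw [NNReal.coe_rpow, NNReal.coe_add, Real.coe_toNNReal _ ha,
          Real.coe_toNNReal _ hb]
    _ ≤ (((2 : ℝ≥0) ^ (q - 1) * (a.toNNReal ^ q + b.toNNReal ^ q) : ℝ≥0) : ℝ) := by
        exact_mod_cast key
    _ = 2 ^ (q - 1) * (a ^ q + b ^ q) := by
        push_cast
        rw [Real.coe_toNNReal _ ha, Real.coe_toNNReal _ hb]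

/-- superadditivity: `a^q + b^q ≤ (a+b)^q` for nonneg reals and `1 ≤ q`. -/
lemma aux_super {a b q : ℝ} (ha : 0 ≤ a) (hb : 0 ≤ b) (hq : 1 ≤ q) :
    a ^ q + b ^ q ≤ (a + b) ^ q := by
  have key := NNReal.add_rpow_le_rpow_add a.toNNReal b.toNNReal hq
  calc a ^ q + b ^ q
      = (((a.toNNReal ^ q + b.toNNReal ^ q : ℝ≥0)) : ℝ) := by
        push_cast
        rw [Real.coe_toNNReal _ ha, Real.coe_toNNReal _ hb]
    _ ≤ (((a.toNNReal + b.toNNReal) ^ q : ℝ≥0) : ℝ) := by exact_mod_cast key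
    _ = (a + b) ^ q := by
        push_cast
        rw [Real.coe_toNNReal _ ha, Real.coe_toNNReal _ hb]

lemma aux_key (p : ℝ) (hp : 2 ≤ p) (t₁ t₂ : ℝ) (h : 0 < t₁ + t₂) (hle : t₂ ≤ t₁) :
    |t₁ + t₂| ^ (p - 2) * (t₁ + t₂) ≤
      2 ^ (p - 2) * (|t₁| ^ (p - 2) * t₁ + |t₂| ^ (p - 2) * t₂) := by
  have hq : 1 ≤ p - 1 := by linarith
  have hpe : p - 1 = (p - 2) + 1 := by ring
  have ht₁ : 0 < t₁ := by linarith
  have hs : |t₁ + t₂| ^ (p - 2) * (t₁ + t₂) = (t₁ + t₂) ^ (p - 1) := by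
    rw [abs_of_pos h, hpe, Real.rpow_add h, Real.rpow_one]
  have hG1 : |t₁| ^ (p - 2) * t₁ = t₁ ^ (p - 1) := by
    rw [abs_of_pos ht₁, hpe, Real.rpow_add ht₁, Real.rpow_one]
  rw [hs, hG1]
  rcases le_or_gt 0 t₂ with h2 | h2
  · -- both nonnegative
    have hG2 : |t₂| ^ (p - 2) * t₂ = t₂ ^ (p - 1) := by
      rcases eq_or_lt_of_le h2 with rfl | h2'
      · rw [Real.zero_rpow (by linarith : p - 1 ≠ 0)]; simp
      · rw [abs_of_pos h2', hpe, Real.rpow_add h2', Real.rpow_one]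
    rw [hG2]
    have := aux_convex ht₁.le h2 hq
    simpa [show p - 1 - 1 = p - 2 by ring] using this
  · -- t₂ < 0
    set b := -t₂ with hb
    have hbpos : 0 < b := by simp [hb]; linarith
    have hG2 : |t₂| ^ (p - 2) * t₂ = -(b ^ (p - 1)) := by
      rw [abs_of_neg h2, show t₂ = -b by simp [hb], hpe, Real.rpow_add hbpos,
        Real.rpow_one]
      ring
    rw [hG2]
    have hsuper := aux_super (a := t₁ + t₂) (b := b) h.le hbpos.le hq
    have habs : t₁ + t₂ + b = t₁ := by simp [hb]
    rw [habs] at hsuper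
    have h1 : (t₁ + t₂) ^ (p - 1) ≤ t₁ ^ (p - 1) + -(b ^ (p - 1)) := by linarith
    have hnn : 0 ≤ t₁ ^ (p - 1) + -(b ^ (p - 1)) := by
      have := Real.rpow_nonneg h.le (p - 1)
      linarith
    have h2pow : (1 : ℝ) ≤ 2 ^ (p - 2) := by
      apply Real.one_le_rpow (by norm_num) (by linarith)
    nlinarith [hnn, h1, h2pow]

/-- Lemma 6.1: for `G t = |t|^(p-2) * t` with `p ≥ 2`, if `t₁ + t₂ > 0` then
`G (t₁ + t₂) ≤ 2^(p-2) * (G t₁ + G t₂)`. -/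
theorem stmt_0 (p : ℝ) (hp : 2 ≤ p) (G : ℝ → ℝ)
    (hG : ∀ t : ℝ, G t = |t| ^ (p - 2) * t)
    (t₁ t₂ : ℝ) (h : 0 < t₁ + t₂) :
    G (t₁ + t₂) ≤ 2 ^ (p - 2) * (G t₁ + G t₂) := by
  rw [hG, hG, hG]
  rcases le_total t₂ t₁ with hle | hle
  · exact aux_key p hp t₁ t₂ h hle
  · have := aux_key p hp t₂ t₁ (by linarith) hle
    rw [add_comm t₂ t₁] at this
    linarith
end

section
/- Let p ≥ 2 and define F(t) = |1+t|^{p-2}(1+t) − 2^{p-2}(1 + |t|^{p-2} t) for t > −1. Then F(t) ≤ 0 for all t > −1, with equality at t = 1, and F(t) → 0 as t → −1⁺. -/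
/-- For `p ≥ 2` and `F t = |1+t|^(p-2) (1+t) - 2^(p-2) (1 + |t|^(p-2) t)` on `t > -1`:
`F ≤ 0` on `(-1, ∞)`, `F 1 = 0`, and `F t → 0` as `t → -1⁺`. -/
theorem stmt_2 (p : ℝ) (hp : 2 ≤ p) (F : ℝ → ℝ)
    (hF : ∀ t : ℝ, F t = |1 + t| ^ (p - 2) * (1 + t) - 2 ^ (p - 2) * (1 + |t| ^ (p - 2) * t)) :
    (∀ t : ℝ, -1 < t → F t ≤ 0) ∧ F 1 = 0 ∧
      Filter.Tendsto F (nhdsWithin (-1) (Set.Ioi (-1))) (nhds 0) := by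
  have hq : (1 : ℝ) ≤ p - 1 := by linarith
  have h2p : (1 : ℝ) ≤ 2 ^ (p - 2) := by
    calc (1:ℝ) = 2 ^ (0:ℝ) := by simp
    _ ≤ 2 ^ (p - 2) := Real.rpow_le_rpow_of_exponent_le one_le_two (by linarith)
  have key : ∀ t : ℝ, 0 ≤ t → (1 + t) ^ (p - 1) ≤ 2 ^ (p - 2) * (1 + t ^ (p - 1)) := by
    intro t ht
    have h := NNReal.rpow_add_le_mul_rpow_add_rpow 1 t.toNNReal hq
    have h' := NNReal.coe_le_coe.2 h
    push_cast at h'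
    rw [Real.coe_toNNReal t ht] at h'
    have e : p - 1 - 1 = p - 2 := by ring
    rw [e] at h'
    simpa using h'
  refine ⟨?_, ?_, ?_⟩
  · intro t ht
    rw [hF]
    have h1 : (0 : ℝ) < 1 + t := by linarith
    rw [abs_of_pos h1, sub_nonpos]
    have hpow : (1 + t) ^ (p - 2) * (1 + t) = (1 + t) ^ (p - 1) := by
      rw [show p - 1 = p - 2 + 1 by ring, Real.rpow_add_one h1.ne']
    rw [hpow]
    rcases lt_trichotomy t 0 with htn | rfl | htp
    · -- -1 < t < 0
      set u : ℝ := -t with hu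
      have hu0 : 0 < u := by simp [hu]; linarith
      have hu1 : u ≤ 1 := by simp [hu]; linarith
      have habs : |t| = u := abs_of_neg htn
      rw [habs]
      have e1 : u ^ (p - 2) * t = -(u ^ (p - 1)) := by
        rw [show p - 1 = p - 2 + 1 by ring, Real.rpow_add_one hu0.ne']
        simp [hu]
      rw [e1]
      have s1 : (1 + t) ^ (p - 1) ≤ 1 + t := by
        calc (1 + t) ^ (p - 1) ≤ (1 + t) ^ (1:ℝ) :=
          Real.rpow_le_rpow_of_exponent_ge h1 (by linarith) hq
        _ = 1 + t := Real.rpow_one _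
      have s2 : u ^ (p - 1) ≤ u := by
        calc u ^ (p - 1) ≤ u ^ (1:ℝ) :=
          Real.rpow_le_rpow_of_exponent_ge hu0 hu1 hq
        _ = u := Real.rpow_one _
      have s3 : (0:ℝ) ≤ 1 + -(u ^ (p - 1)) := by
        have : u ^ (p-1) ≤ 1 := le_trans s2 hu1
        linarith
      calc (1 + t) ^ (p - 1) ≤ 1 + t := s1
        _ ≤ 1 + -(u ^ (p - 1)) := by simp [hu] at s2 ⊢; linarith
        _ ≤ 2 ^ (p - 2) * (1 + -(u ^ (p - 1))) := le_mul_of_one_le_left s3 h2p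
    · -- t = 0
      simpa using le_trans (by norm_num) h2p
    · -- t > 0
      rw [abs_of_pos htp, show t ^ (p - 2) * t = t ^ (p - 1) by
        rw [show p - 1 = p - 2 + 1 by ring, Real.rpow_add_one htp.ne']]
      exact key t htp.le
  · rw [hF]
    norm_num
  · have c1 : ContinuousAt (fun t : ℝ => (1 + t) ^ (p - 1)) (-1) := by
      have : ContinuousAt (fun x : ℝ => x ^ (p - 1)) (1 + (-1)) :=
        Real.continuousAt_rpow_const _ _ (Or.inr (by linarith))
      exact this.comp (continuousAt_const.add continuousAt_id)
    have c2 : ContinuousAt (fun t : ℝ => 2 ^ (p - 2) * (1 + |t| ^ (p - 2) * t)) (-1) := by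
      have habs : ContinuousAt (fun t : ℝ => |t|) (-1) := continuous_abs.continuousAt
      have hr : ContinuousAt (fun x : ℝ => x ^ (p - 2)) (|(-1:ℝ)|) :=
        Real.continuousAt_rpow_const _ _ (Or.inl (by norm_num))
      exact continuousAt_const.mul (continuousAt_const.add ((hr.comp habs).mul continuousAt_id))
    have hval : (fun t : ℝ => (1 + t) ^ (p - 1) - 2 ^ (p - 2) * (1 + |t| ^ (p - 2) * t)) (-1)
        = 0 := by
      simp [Real.zero_rpow (by linarith : p - 1 ≠ 0)]
    have htend : Filter.Tendsto
        (fun t : ℝ => (1 + t) ^ (p - 1) - 2 ^ (p - 2) * (1 + |t| ^ (p - 2) * t))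
        (nhds (-1)) (nhds 0) := by
      rw [← hval]
      exact (c1.sub c2).tendsto
    refine Filter.Tendsto.congr' ?_ (htend.mono_left nhdsWithin_le_nhds)
    filter_upwards [self_mem_nhdsWithin] with t ht
    rw [hF]
    have h1 : (0 : ℝ) < 1 + t := by simp at ht; linarith
    rw [abs_of_pos h1, show p - 1 = p - 2 + 1 by ring, Real.rpow_add_one h1.ne']
end
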